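/- Let G be a finite group and Γ = P*(G). An edge e = {x, y} of Γ is a cut edge if and only if one of its endpoints, say x, has order 3 and the only element z of G with x ∈ ⟨z⟩ and z ≠ x is z = x^2 (equivalently, in the directed power graph on G \ {1}, x has in-degree 1 and out-degree 1). -/

import Mathlib

def powerGraph (G : Type*) [Group G] : SimpleGraph G where
  Adj x y := x ≠ y ∧ ((∃ m : ℕ, 0 < m ∧ y = x ^ m) ∨ (∃ m : ℕ, 0 < m ∧ x = y ^ m))
  symm := ⟨fun x y h => ⟨h.1.symm, h.2.symm⟩⟩
  loopless := ⟨fun x h => h.1 rfl⟩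

def powerGraphStar (G : Type*) [Group G] : SimpleGraph {g : G // g ≠ 1} :=
  (powerGraph G).induce {g : G | g ≠ 1}

/-!
An edge with a common neighbour lies on a triangle, so a bridge `{x, y}` with `y ∈ ⟨x⟩` has none.
The generator `x⁻¹` of `⟨x⟩` is adjacent to both ends unless `y = x⁻¹`; then `x²` is adjacent to
`x` and to `x⁻¹` unless `x² = x⁻¹`, so `x` has order `3`, and any `z ≠ x, x²` with `x ∈ ⟨z⟩` would
again be a common neighbour. Conversely, under that condition `x²` is the only neighbour of `x`,
and an edge at a vertex of degree one is a bridge.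
-/

namespace SimpleGraph

variable {V : Type*} {Γ : SimpleGraph V} {x y z : V}

theorem IsBridge.ne (h : Γ.IsBridge s(x, y)) : x ≠ y := by
  rintro rfl
  exact h (Reachable.refl x)

theorem not_isBridge_of_adj_of_adj (hxz : Γ.Adj x z) (hzy : Γ.Adj z y) :
    ¬Γ.IsBridge s(x, y) := by
  rw [isBridge_iff_forall_walk_mem_edges, not_forall]
  refine ⟨.cons hxz (.cons hzy .nil), ?_⟩
  simp [hxz.ne, hzy.ne.symm]

theorem isBridge_of_forall_adj_eq (hne : x ≠ y) (h : ∀ w, Γ.Adj x w → w = y) :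
    Γ.IsBridge s(x, y) := by
  rw [isBridge_iff_forall_walk_mem_edges]
  rintro (_ | ⟨hxw, -⟩)
  · exact absurd rfl hne
  · obtain rfl := h _ hxw
    simp

end SimpleGraph

section PowerGraph

open Subgroup

variable {G : Type*} [Group G] [Finite G]

theorem exists_pos_pow_eq_iff_mem_zpowers {x y : G} :
    (∃ m : ℕ, 0 < m ∧ y = x ^ m) ↔ y ∈ zpowers x := by
  refine ⟨fun ⟨m, _, hm⟩ => hm ▸ npow_mem_zpowers x m, fun h => ?_⟩
  obtain ⟨n, rfl⟩ := mem_powers_iff_mem_zpowers.2 h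
  rcases Nat.eq_zero_or_pos n with rfl | hn
  · exact ⟨orderOf x, orderOf_pos x, by simp⟩
  · exact ⟨n, hn, rfl⟩

theorem exists_lt_orderOf_pow_eq_of_mem_zpowers {x y : G} (hy : y ∈ zpowers x) :
    ∃ k < orderOf x, y = x ^ k := by
  classical
  simpa [mem_zpowers_iff_mem_range_orderOf, eq_comm] using hy

theorem eq_one_or_eq_of_mem_zpowers_of_orderOf_eq_two {x y : G} (h2 : orderOf x = 2)
    (hy : y ∈ zpowers x) : y = 1 ∨ y = x := by
  obtain ⟨k, hk, rfl⟩ := exists_lt_orderOf_pow_eq_of_mem_zpowers hy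
  rw [h2] at hk
  interval_cases k <;> simp

theorem eq_sq_of_mem_zpowers_of_orderOf_eq_three {x y : G} (h3 : orderOf x = 3)
    (hy : y ∈ zpowers x) (hy1 : y ≠ 1) (hyx : y ≠ x) : y = x ^ 2 := by
  obtain ⟨k, hk, rfl⟩ := exists_lt_orderOf_pow_eq_of_mem_zpowers hy
  rw [h3] at hk
  interval_cases k <;> simp_all

theorem powerGraphStar_adj_iff {x y : {g : G // g ≠ 1}} :
    (powerGraphStar G).Adj x y ↔
      (x : G) ≠ y ∧ ((y : G) ∈ zpowers (x : G) ∨ (x : G) ∈ zpowers (y : G)) := by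
  simp only [powerGraphStar, SimpleGraph.comap_adj, powerGraph, exists_pos_pow_eq_iff_mem_zpowers]
  rfl

variable {x y : {g : G // g ≠ 1}}

theorem orderOf_eq_three_of_isBridge_powerGraphStar
    (hbridge : (powerGraphStar G).IsBridge s(x, y)) (hyx : (y : G) ∈ zpowers (x : G)) :
    orderOf (x : G) = 3 ∧
      ∀ z : G, (x : G) ∈ zpowers z → z ≠ (x : G) → z = (x : G) ^ 2 := by
  have no_common_neighbor : ∀ z : G, z ≠ 1 → z ≠ x → z ≠ y →
      (z ∈ zpowers (x : G) ∨ (x : G) ∈ zpowers z) →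
      ((y : G) ∈ zpowers z ∨ z ∈ zpowers (y : G)) → False := fun z hz1 hzx hzy hxz hyz =>
    SimpleGraph.not_isBridge_of_adj_of_adj (z := ⟨z, hz1⟩)
      (powerGraphStar_adj_iff.2 ⟨hzx.symm, hxz⟩) (powerGraphStar_adj_iff.2 ⟨hzy, hyz⟩) hbridge
  have hxy : (x : G) ≠ y := fun h => hbridge.ne (Subtype.ext h)
  obtain ⟨a, ha⟩ := x
  obtain ⟨b, hb⟩ := y
  dsimp only at *
  have hb_inv : b = a⁻¹ := by
    by_contra hb_inv
    have ha_inv : a⁻¹ ≠ a := fun h => by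
      have h2 : orderOf a = 2 := orderOf_eq_prime (by rw [sq, mul_eq_one_iff_eq_inv, h]) ha
      exact (eq_one_or_eq_of_mem_zpowers_of_orderOf_eq_two h2 hyx).elim hb hxy.symm
    exact no_common_neighbor _ (inv_ne_one.2 ha) ha_inv (Ne.symm hb_inv)
      (Or.inl (inv_mem (mem_zpowers a))) (Or.inl (by rwa [zpowers_inv]))
  have hsq : a ^ 2 = a⁻¹ := by
    by_contra hsq
    have hsq1 : a ^ 2 ≠ 1 := fun h => hxy (by rw [hb_inv, ← mul_eq_one_iff_eq_inv, ← sq, h])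
    have hsqa : a ^ 2 ≠ a := fun h => ha (by rwa [sq, mul_eq_right] at h)
    exact no_common_neighbor _ hsq1 hsqa (hb_inv ▸ hsq) (Or.inl (npow_mem_zpowers a 2))
      (Or.inr (by rw [hb_inv, zpowers_inv]; exact npow_mem_zpowers a 2))
  refine ⟨orderOf_eq_prime (by rw [pow_succ, hsq, inv_mul_cancel]) ha, fun z hz hza => ?_⟩
  by_contra hz2
  have hz1 : z ≠ 1 := by
    rintro rfl
    exact ha (by simpa using hz)
  exact no_common_neighbor z hz1 hza (hb_inv ▸ hsq ▸ hz2) (Or.inr hz)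
    (Or.inl (hb_inv ▸ inv_mem hz))

theorem isBridge_powerGraphStar_of_orderOf_eq_three (hxy : (powerGraphStar G).Adj x y)
    (h3 : orderOf (x : G) = 3)
    (hroots : ∀ z : G, (x : G) ∈ zpowers z → z ≠ (x : G) → z = (x : G) ^ 2) :
    (powerGraphStar G).IsBridge s(x, y) := by
  have neighbor_eq_sq : ∀ w, (powerGraphStar G).Adj x w → (w : G) = (x : G) ^ 2 := fun w hw => by
    obtain ⟨hxw, hwx | hxw'⟩ := powerGraphStar_adj_iff.1 hw
    · exact eq_sq_of_mem_zpowers_of_orderOf_eq_three h3 hwx w.2 hxw.symm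
    · exact hroots w hxw' hxw.symm
  exact SimpleGraph.isBridge_of_forall_adj_eq hxy.ne fun w hw =>
    Subtype.ext ((neighbor_eq_sq w hw).trans (neighbor_eq_sq y hxy).symm)

end PowerGraph

theorem powerGraphStar_isBridge_iff (G : Type*) [Group G] [Fintype G]
    (x y : {g : G // g ≠ 1}) (hxy : (powerGraphStar G).Adj x y) :
    (powerGraphStar G).IsBridge s(x, y) ↔
      ((orderOf (x : G) = 3 ∧
          ∀ z : G, (x : G) ∈ Subgroup.zpowers z → z ≠ (x : G) → z = (x : G) ^ 2) ∨
        (orderOf (y : G) = 3 ∧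
          ∀ z : G, (y : G) ∈ Subgroup.zpowers z → z ≠ (y : G) → z = (y : G) ^ 2)) := by
  constructor
  · intro hb
    rcases (powerGraphStar_adj_iff.1 hxy).2 with hyx | hxy'
    · exact .inl (orderOf_eq_three_of_isBridge_powerGraphStar hb hyx)
    · exact .inr (orderOf_eq_three_of_isBridge_powerGraphStar (Sym2.eq_swap ▸ hb) hxy')
  · rintro (⟨h3, hroots⟩ | ⟨h3, hroots⟩)
    · exact isBridge_powerGraphStar_of_orderOf_eq_three hxy h3 hroots
    · exact Sym2.eq_swap ▸ isBridge_powerGraphStar_of_orderOf_eq_three hxy.symm h3 hroots
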